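/- arXiv:1807.02102 — 2 statements merged into one kernel-verified Lean document; each statement's English description precedes it below -/
import Mathlib

section
/- Let U be a series-parallel pomset over a finite alphabet Σ. Then exactly one of the following holds: (i) U is the empty pomset, (ii) U is primitive (i.e., a single labelled event), (iii) U is sequential (i.e., U = U₁ · U₂ for non-empty pomsets U₁, U₂), or (iv) U is parallel (i.e., U = U₁ ∥ U₂ for non-empty pomsets U₁, U₂). -/
namespace WBKA

/-- Series-parallel terms over an alphabet `A`. -/
inductive SPTerm (A : Type) : Type
  | one : SPTerm A
  | atom : A → SPTerm A
  | seq : SPTerm A → SPTerm A → SPTerm A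
  | par : SPTerm A → SPTerm A → SPTerm A

/-- The congruence generated by the series-parallel pomset axioms:
associativity of both compositions, commutativity of parallel composition,
and the empty pomset acting as unit for both. -/
inductive SPEquiv {A : Type} : SPTerm A → SPTerm A → Prop
  | refl (u : SPTerm A) : SPEquiv u u
  | symm {u v : SPTerm A} : SPEquiv u v → SPEquiv v u
  | trans {u v w : SPTerm A} : SPEquiv u v → SPEquiv v w → SPEquiv u w
  | seqCongr {u u' v v' : SPTerm A} :
      SPEquiv u u' → SPEquiv v v' → SPEquiv (u.seq v) (u'.seq v')
  | parCongr {u u' v v' : SPTerm A} :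
      SPEquiv u u' → SPEquiv v v' → SPEquiv (u.par v) (u'.par v')
  | seqAssoc (u v w : SPTerm A) : SPEquiv ((u.seq v).seq w) (u.seq (v.seq w))
  | parAssoc (u v w : SPTerm A) : SPEquiv ((u.par v).par w) (u.par (v.par w))
  | parComm (u v : SPTerm A) : SPEquiv (u.par v) (v.par u)
  | seqOneLeft (u : SPTerm A) : SPEquiv (SPTerm.one.seq u) u
  | seqOneRight (u : SPTerm A) : SPEquiv (u.seq SPTerm.one) u
  | parOne (u : SPTerm A) : SPEquiv (u.par SPTerm.one) u

instance spSetoid (A : Type) : Setoid (SPTerm A) :=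
  ⟨SPEquiv, SPEquiv.refl, SPEquiv.symm, SPEquiv.trans⟩

/-- Series-parallel pomsets over `A`, as the free algebra on the sp-pomset axioms. -/
def Pomset (A : Type) : Type := Quotient (spSetoid A)

namespace Pomset

variable {A : Type}

def mk (u : SPTerm A) : Pomset A := Quotient.mk (spSetoid A) u

/-- The empty pomset `1`. -/
def eps : Pomset A := mk SPTerm.one

/-- The primitive pomset consisting of a single event labelled `a`. -/
def atom (a : A) : Pomset A := mk (SPTerm.atom a)

/-- Sequential composition of pomsets. -/
def seq : Pomset A → Pomset A → Pomset A :=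
  Quotient.lift₂ (fun u v => mk (u.seq v))
    (fun _ _ _ _ hu hv => Quotient.sound (SPEquiv.seqCongr hu hv))

/-- Parallel composition of pomsets. -/
def par : Pomset A → Pomset A → Pomset A :=
  Quotient.lift₂ (fun u v => mk (u.par v))
    (fun _ _ _ _ hu hv => Quotient.sound (SPEquiv.parCongr hu hv))

/-- `U` is the empty pomset. -/
def IsEmptyP (U : Pomset A) : Prop := U = eps

/-- `U` is primitive: it consists of a single labelled event. -/
def Primitive (U : Pomset A) : Prop := ∃ a : A, U = atom a

/-- `U` is sequential: a sequential composition of two non-empty pomsets. -/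
def Sequential (U : Pomset A) : Prop :=
  ∃ V W : Pomset A, V ≠ eps ∧ W ≠ eps ∧ U = seq V W

/-- `U` is parallel: a parallel composition of two non-empty pomsets. -/
def Parallel (U : Pomset A) : Prop :=
  ∃ V W : Pomset A, V ≠ eps ∧ W ≠ eps ∧ U = par V W

/-- `U` is a sequential prime. -/
def SeqPrime (U : Pomset A) : Prop :=
  U ≠ eps ∧ ∀ V W : Pomset A, U = seq V W → V = eps ∨ W = eps

/-- `U` is a parallel prime. -/
def ParPrime (U : Pomset A) : Prop :=
  U ≠ eps ∧ ∀ V W : Pomset A, U = par V W → V = eps ∨ W = eps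

/-- Sequential product of a list of pomsets. -/
def seqProd (l : List (Pomset A)) : Pomset A := l.foldr seq eps

/-- Parallel product of a list of pomsets. -/
def parProd (l : List (Pomset A)) : Pomset A := l.foldr par eps

end Pomset

/-- Pointwise sequential composition of pomset languages. -/
def langSeq {A : Type} (L M : Set (Pomset A)) : Set (Pomset A) :=
  Set.image2 Pomset.seq L M

/-- Pointwise parallel composition of pomset languages. -/
def langPar {A : Type} (L M : Set (Pomset A)) : Set (Pomset A) :=
  Set.image2 Pomset.par L M

/-- `n`-fold sequential power of a language. -/
def langPow {A : Type} (L : Set (Pomset A)) : ℕ → Set (Pomset A)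
  | 0 => {Pomset.eps}
  | n + 1 => langSeq L (langPow L n)

/-- Kleene closure of a pomset language. -/
def langStar {A : Type} (L : Set (Pomset A)) : Set (Pomset A) :=
  ⋃ n : ℕ, langPow L n

/-- Series-rational expressions over `A`. -/
inductive SR (A : Type) : Type
  | zero : SR A
  | one : SR A
  | atom : A → SR A
  | plus : SR A → SR A → SR A
  | seq : SR A → SR A → SR A
  | par : SR A → SR A → SR A
  | star : SR A → SR A

/-- The sp-language semantics of series-rational expressions. -/
def sem {A : Type} : SR A → Set (Pomset A)
  | .zero => ∅
  | .one => {Pomset.eps}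
  | .atom a => {Pomset.atom a}
  | .plus e f => sem e ∪ sem f
  | .seq e f => langSeq (sem e) (sem f)
  | .par e f => langPar (sem e) (sem f)
  | .star e => langStar (sem e)

/-- The syntactic predicate `F` characterising acceptance of the empty pomset. -/
inductive EF {A : Type} : SR A → Prop
  | one : EF SR.one
  | plusLeft {e : SR A} (f : SR A) : EF e → EF (SR.plus e f)
  | plusRight (e : SR A) {f : SR A} : EF f → EF (SR.plus e f)
  | seq {e f : SR A} : EF e → EF f → EF (SR.seq e f)
  | par {e f : SR A} : EF e → EF f → EF (SR.par e f)
  | star (e : SR A) : EF (SR.star e)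

/-- Pomset automata. -/
structure PA (A : Type) (Q : Type) where
  acc : Set Q
  δ : Q → A → Set Q
  γ : Q → Multiset Q → Set Q

/-- The run relation of a pomset automaton. -/
inductive Run {A Q : Type} (M : PA A Q) : Q → Pomset A → Q → Prop
  | triv (q : Q) : Run M q Pomset.eps q
  | seqUnit {q : Q} {a : A} {q' : Q} :
      q' ∈ M.δ q a → Run M q (Pomset.atom a) q'
  | comp {q : Q} {U : Pomset A} {q'' : Q} {V : Pomset A} {q' : Q} :
      Run M q U q'' → Run M q'' V q' → Run M q (U.seq V) q'
  | parUnit {q q' : Q} (l : List (Q × Pomset A × Q)) :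
      q' ∈ M.γ q (↑(l.map Prod.fst) : Multiset Q) →
      (∀ x ∈ l, x.2.2 ∈ M.acc) →
      (∀ x ∈ l, Run M x.1 x.2.1 x.2.2) →
      Run M q (Pomset.parProd (l.map fun x => x.2.1)) q'

/-- Language of a state of a pomset automaton. -/
def PA.lang {A Q : Type} (M : PA A Q) (q : Q) : Set (Pomset A) :=
  {U | ∃ q' ∈ M.acc, Run M q U q'}

/-- The triple `q →^U q'` matches the trivial-run rule. -/
def TrivialRun {A Q : Type} (_M : PA A Q) (q : Q) (U : Pomset A) (q' : Q) : Prop :=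
  U = Pomset.eps ∧ q = q'

/-- `q →^U q'` is a sequential unit run. -/
def SeqUnitRun {A Q : Type} (M : PA A Q) (q : Q) (U : Pomset A) (q' : Q) : Prop :=
  ∃ a : A, U = Pomset.atom a ∧ q' ∈ M.δ q a

/-- `q →^U q'` is a parallel unit run. -/
def ParUnitRun {A Q : Type} (M : PA A Q) (q : Q) (U : Pomset A) (q' : Q) : Prop :=
  ∃ l : List (Q × Pomset A × Q),
    q' ∈ M.γ q (↑(l.map Prod.fst) : Multiset Q) ∧
    (∀ x ∈ l, x.2.2 ∈ M.acc ∧ Run M x.1 x.2.1 x.2.2) ∧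
    U = Pomset.parProd (l.map fun x => x.2.1)

/-- `q →^U q'` is a unit run: a sequential or a parallel unit run. -/
def UnitRun {A Q : Type} (M : PA A Q) (q : Q) (U : Pomset A) (q' : Q) : Prop :=
  SeqUnitRun M q U q' ∨ ParUnitRun M q U q'

/-- `q →^U q'` is a composite run: a sequential composition of two non-trivial runs. -/
def CompositeRun {A Q : Type} (M : PA A Q) (q : Q) (U : Pomset A) (q' : Q) : Prop :=
  ∃ (V W : Pomset A) (q'' : Q),
    U = V.seq W ∧ Run M q V q'' ∧ Run M q'' W q' ∧
    ¬ TrivialRun M q V q'' ∧ ¬ TrivialRun M q'' W q'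

/-- The support preorder: `Supports M q' q` means `q' ⪯ q`. -/
inductive Supports {A Q : Type} (M : PA A Q) : Q → Q → Prop
  | refl (q : Q) : Supports M q q
  | trans {q r p : Q} : Supports M q r → Supports M r p → Supports M q p
  | deltaStep {q : Q} {a : A} {q' : Q} : q' ∈ M.δ q a → Supports M q' q
  | gammaStep {q : Q} {φ : Multiset Q} {q' : Q} : q' ∈ M.γ q φ → Supports M q' q
  | forkStep {q : Q} {φ : Multiset Q} {r : Q} :
      r ∈ φ → (M.γ q φ).Nonempty → Supports M r q

/-- A pomset automaton is fork-acyclic when every fork target `r` of `q`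
satisfies `r ≺ q`, i.e. `q ⋠ r`. -/
def ForkAcyclic {A Q : Type} (M : PA A Q) : Prop :=
  ∀ (q : Q) (φ : Multiset Q) (r : Q),
    r ∈ φ → (M.γ q φ).Nonempty → ¬ Supports M q r

/-- A set of states is support-closed. -/
def SupportClosed {A Q : Type} (M : PA A Q) (S : Set Q) : Prop :=
  ∀ q ∈ S, ∀ q' : Q, Supports M q' q → q' ∈ S

/-- Restriction of a pomset automaton to a set of states. -/
def PA.restrict {A Q : Type} (M : PA A Q) (S : Set Q) : PA A {q : Q // q ∈ S} where
  acc := {q | q.val ∈ M.acc}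
  δ := fun q a => {r | r.val ∈ M.δ q.val a}
  γ := fun q φ => {r | r.val ∈ M.γ q.val (φ.map Subtype.val)}

/-- `n`-forking automata. -/
def NForking {A Q : Type} (M : PA A Q) (n : ℕ) : Prop :=
  ∀ (q : Q) (φ : Multiset Q), (M.γ q φ).Nonempty → n ≤ Multiset.card φ

/-- Parsimonious automata: no fork target accepts the empty pomset. -/
def Parsimonious {A Q : Type} (M : PA A Q) : Prop :=
  ∀ (p : Q) (φ : Multiset Q) (q : Q),
    q ∈ φ → (M.γ p φ).Nonempty → Pomset.eps ∉ M.lang q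

/-- Flat-branching automata: forks from fork targets never reach accepting states. -/
def FlatBranching {A Q : Type} (M : PA A Q) : Prop :=
  ∀ (p : Q) (φ : Multiset Q) (q : Q),
    q ∈ φ → (M.γ p φ).Nonempty → ∀ ψ : Multiset Q, M.γ q ψ ∩ M.acc = ∅

/-- Well-structured pomset automata. -/
def WellStructured {A Q : Type} (M : PA A Q) : Prop :=
  (∀ (q : Q) (φ : Multiset Q), (M.γ q φ).Nonempty → 2 ≤ Multiset.card φ) ∧
  ∀ (p : Q) (φ : Multiset Q) (q : Q), q ∈ φ → (M.γ p φ).Nonempty →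
    q ∉ M.acc ∧ ∀ ψ : Multiset Q, M.γ q ψ ∩ M.acc = ∅

/-- The relation `⇝` characterising runs labelled by the empty pomset. -/
inductive Leadsto {A Q : Type} (M : PA A Q) : Q → Q → Prop
  | refl (p : Q) : Leadsto M p p
  | trans {p r q : Q} : Leadsto M p r → Leadsto M r q → Leadsto M p q
  | fork {p q : Q} (l : List (Q × Q)) :
      q ∈ M.γ p (↑(l.map Prod.fst) : Multiset Q) →
      (∀ x ∈ l, x.2 ∈ M.acc) →
      (∀ x ∈ l, Leadsto M x.1 x.2) →
      Leadsto M p q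

/-- Concatenate each expression of a set with `f` on the right. -/
def seqAfter {A : Type} (T : Set (SR A)) (f : SR A) : Set (SR A) :=
  (fun g => SR.seq g f) '' T

/-- Antimirov-style sequential derivatives of sr-expressions. -/
def deltaS {A : Type} : SR A → A → Set (SR A)
  | .zero, _ => ∅
  | .one, _ => ∅
  | .atom b, a => {g | g = SR.one ∧ a = b}
  | .plus e f, a => deltaS e a ∪ deltaS f a
  | .seq e f, a => seqAfter (deltaS e a) f ∪ {g | g ∈ deltaS f a ∧ EF e}
  | .par _ _, _ => ∅
  | .star e, a => seqAfter (deltaS e a) (SR.star e)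

/-- Antimirov-style parallel derivatives of sr-expressions. -/
def gammaS {A : Type} : SR A → Multiset (SR A) → Set (SR A)
  | .zero, _ => ∅
  | .one, _ => ∅
  | .atom _, _ => ∅
  | .plus e f, φ => gammaS e φ ∪ gammaS f φ
  | .seq e f, φ => seqAfter (gammaS e φ) f ∪ {g | g ∈ gammaS f φ ∧ EF e}
  | .par e f, φ => {g | g = SR.one ∧ φ = {e, f}}
  | .star e, φ => seqAfter (gammaS e φ) (SR.star e)

/-- The syntactic pomset automaton on sr-expressions. -/
def synPA (A : Type) : PA A (SR A) where
  acc := {e | EF e}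
  δ := deltaS
  γ := gammaS

/-- The parallel-nesting depth of an sr-expression. -/
def pdepth {A : Type} : SR A → ℕ
  | .zero => 0
  | .one => 0
  | .atom _ => 0
  | .plus e f => max (pdepth e) (pdepth f)
  | .seq e f => max (pdepth e) (pdepth f)
  | .par e f => max (pdepth e) (pdepth f) + 1
  | .star e => pdepth e

/-- A substitution `ζ : Σ → 2^{SP(Δ)}` is atomic. -/
def Atomic {A B : Type} (ζ : A → Set (Pomset B)) : Prop :=
  (∀ a : A, ∀ U ∈ ζ a, Pomset.SeqPrime U) ∧
  (∀ a b : A, (ζ a ∩ ζ b).Nonempty ↔ a = b)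

/-- Extension of a substitution to words. -/
def substWord {A B : Type} (ζ : A → Set (Pomset B)) : List A → Set (Pomset B)
  | [] => {Pomset.eps}
  | a :: w => langSeq (ζ a) (substWord ζ w)

/-- Extension of a substitution to word languages. -/
def substLang {A B : Type} (ζ : A → Set (Pomset B)) (L : Set (List A)) :
    Set (Pomset B) :=
  ⋃ w ∈ L, substWord ζ w

/-- `L_A(α)` for a set `α` of states: the atom language of `α`. -/
def atomLang {Q U : Type} (LA : Q → Set U) (α : Set Q) : Set U :=
  (⋂ q ∈ α, LA q) \ (⋃ (q : Q) (_ : q ∉ α), LA q)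


/-!
Existence of the decomposition is an induction on terms, discarding empty operands with the unit
laws. Exclusivity comes from two invariants of the axioms: the number of events separates the
empty pomset (zero events), primitives (one event) and composites (at least two), and the number
of parallel components separates sequential pomsets (one component) from parallel ones (at
least two).
-/

section UniqueKind

variable {A : Type}

namespace SPTerm

def size : SPTerm A → ℕ
  | .one => 0
  | .atom _ => 1
  | .seq u v => u.size + v.size
  | .par u v => u.size + v.size

/-- The number of connected components of the pomset denoted by the term: a sequential
composition of non-empty pomsets is connected, and an empty operand has no components. -/
def components : SPTerm A → ℕ
  | .one => 0
  | .atom _ => 1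
  | .seq u v =>
    if u.components = 0 then v.components else if v.components = 0 then u.components else 1
  | .par u v => u.components + v.components

end SPTerm

namespace SPEquiv

theorem size_eq {u v : SPTerm A} (h : SPEquiv u v) : u.size = v.size := by
  induction h <;> simp -failIfUnchanged only [SPTerm.size] at * <;> omega

theorem components_eq {u v : SPTerm A} (h : SPEquiv u v) : u.components = v.components := by
  induction h <;> simp -failIfUnchanged only [SPTerm.components] at * <;> (try split_ifs at *) <;>
    omega

end SPEquiv

namespace Pomset

theorem induction_on {P : Pomset A → Prop} (U : Pomset A) (eps : P eps)
    (atom : ∀ a, P (atom a)) (seq : ∀ V W, P V → P W → P (seq V W))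
    (par : ∀ V W, P V → P W → P (par V W)) : P U :=
  Quotient.inductionOn U fun u => by
    induction u with
    | one => exact eps
    | atom a => exact atom a
    | seq u v ihu ihv => exact seq (mk u) (mk v) ihu ihv
    | par u v ihu ihv => exact par (mk u) (mk v) ihu ihv

theorem eps_seq (U : Pomset A) : seq eps U = U :=
  Quotient.inductionOn U fun u => Quotient.sound (SPEquiv.seqOneLeft u)

theorem seq_eps (U : Pomset A) : seq U eps = U :=
  Quotient.inductionOn U fun u => Quotient.sound (SPEquiv.seqOneRight u)

theorem par_eps (U : Pomset A) : par U eps = U :=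
  Quotient.inductionOn U fun u => Quotient.sound (SPEquiv.parOne u)

theorem eps_par (U : Pomset A) : par eps U = U :=
  Quotient.inductionOn U fun u =>
    Quotient.sound (SPEquiv.trans (SPEquiv.parComm _ u) (SPEquiv.parOne u))

theorem eq_eps_or_primitive_or_sequential_or_parallel (U : Pomset A) :
    U = eps ∨ U.Primitive ∨ U.Sequential ∨ U.Parallel := by
  induction U using induction_on with
  | eps => exact Or.inl rfl
  | atom a => exact Or.inr (Or.inl ⟨a, rfl⟩)
  | seq V W ihV ihW =>
    by_cases hV : V = eps
    · rwa [hV, eps_seq]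
    by_cases hW : W = eps
    · rwa [hW, seq_eps]
    exact Or.inr (Or.inr (Or.inl ⟨V, W, hV, hW, rfl⟩))
  | par V W ihV ihW =>
    by_cases hV : V = eps
    · rwa [hV, eps_par]
    by_cases hW : W = eps
    · rwa [hW, par_eps]
    exact Or.inr (Or.inr (Or.inr ⟨V, W, hV, hW, rfl⟩))

def size : Pomset A → ℕ :=
  Quotient.lift SPTerm.size fun _ _ => SPEquiv.size_eq

def components : Pomset A → ℕ :=
  Quotient.lift SPTerm.components fun _ _ => SPEquiv.components_eq

theorem size_seq (U V : Pomset A) : (seq U V).size = U.size + V.size :=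
  Quotient.inductionOn₂ U V fun _ _ => rfl

theorem size_par (U V : Pomset A) : (par U V).size = U.size + V.size :=
  Quotient.inductionOn₂ U V fun _ _ => rfl

theorem components_seq (U V : Pomset A) :
    (seq U V).components =
      if U.components = 0 then V.components else if V.components = 0 then U.components else 1 :=
  Quotient.inductionOn₂ U V fun _ _ => rfl

theorem components_par (U V : Pomset A) :
    (par U V).components = U.components + V.components :=
  Quotient.inductionOn₂ U V fun _ _ => rfl

theorem eq_eps_of_size_eq_zero {U : Pomset A} (h : U.size = 0) : U = eps := by
  induction U using induction_on with
  | eps => rfl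
  | atom a => exact absurd h one_ne_zero
  | seq V W ihV ihW =>
    rw [size_seq, Nat.add_eq_zero_iff] at h
    rw [ihV h.1, ihW h.2, eps_seq]
  | par V W ihV ihW =>
    rw [size_par, Nat.add_eq_zero_iff] at h
    rw [ihV h.1, ihW h.2, eps_par]

theorem eq_eps_of_components_eq_zero {U : Pomset A} (h : U.components = 0) : U = eps := by
  induction U using induction_on with
  | eps => rfl
  | atom a => exact absurd h one_ne_zero
  | seq V W ihV ihW =>
    have hVW : V.components = 0 ∧ W.components = 0 := by
      rw [components_seq] at h
      split_ifs at h <;> omega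
    rw [ihV hVW.1, ihW hVW.2, eps_seq]
  | par V W ihV ihW =>
    rw [components_par, Nat.add_eq_zero_iff] at h
    rw [ihV h.1, ihW h.2, eps_par]

theorem Primitive.size_eq_one {U : Pomset A} (h : U.Primitive) : U.size = 1 := by
  obtain ⟨a, rfl⟩ := h
  rfl

theorem Sequential.two_le_size {U : Pomset A} (h : U.Sequential) : 2 ≤ U.size := by
  obtain ⟨V, W, hV, hW, rfl⟩ := h
  have := mt eq_eps_of_size_eq_zero hV
  have := mt eq_eps_of_size_eq_zero hW
  rw [size_seq]
  omega

theorem Parallel.two_le_size {U : Pomset A} (h : U.Parallel) : 2 ≤ U.size := by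
  obtain ⟨V, W, hV, hW, rfl⟩ := h
  have := mt eq_eps_of_size_eq_zero hV
  have := mt eq_eps_of_size_eq_zero hW
  rw [size_par]
  omega

theorem Sequential.components_eq_one {U : Pomset A} (h : U.Sequential) : U.components = 1 := by
  obtain ⟨V, W, hV, hW, rfl⟩ := h
  rw [components_seq, if_neg (mt eq_eps_of_components_eq_zero hV),
    if_neg (mt eq_eps_of_components_eq_zero hW)]

theorem Parallel.two_le_components {U : Pomset A} (h : U.Parallel) : 2 ≤ U.components := by
  obtain ⟨V, W, hV, hW, rfl⟩ := h
  have := mt eq_eps_of_components_eq_zero hV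
  have := mt eq_eps_of_components_eq_zero hW
  rw [components_par]
  omega

theorem Primitive.not_isEmptyP {U : Pomset A} (h : U.Primitive) : ¬ U.IsEmptyP := by
  intro hU
  have := h.size_eq_one
  rw [hU] at this
  exact zero_ne_one this

theorem Sequential.not_isEmptyP {U : Pomset A} (h : U.Sequential) : ¬ U.IsEmptyP := by
  intro hU
  have := h.two_le_size
  rw [hU] at this
  exact Nat.not_succ_le_zero 1 this

theorem Parallel.not_isEmptyP {U : Pomset A} (h : U.Parallel) : ¬ U.IsEmptyP := by
  intro hU
  have := h.two_le_size
  rw [hU] at this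
  exact Nat.not_succ_le_zero 1 this

theorem Sequential.not_primitive {U : Pomset A} (h : U.Sequential) : ¬ U.Primitive := by
  intro hU
  have := h.two_le_size
  rw [hU.size_eq_one] at this
  omega

theorem Parallel.not_primitive {U : Pomset A} (h : U.Parallel) : ¬ U.Primitive := by
  intro hU
  have := h.two_le_size
  rw [hU.size_eq_one] at this
  omega

theorem Sequential.not_parallel {U : Pomset A} (h : U.Sequential) : ¬ U.Parallel := by
  intro hU
  have := hU.two_le_components
  rw [h.components_eq_one] at this
  omega

end Pomset

end UniqueKind

theorem sp_unique_kind_general {A : Type} (U : Pomset A) :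
    (U.IsEmptyP ∧ ¬ U.Primitive ∧ ¬ U.Sequential ∧ ¬ U.Parallel) ∨
    (¬ U.IsEmptyP ∧ U.Primitive ∧ ¬ U.Sequential ∧ ¬ U.Parallel) ∨
    (¬ U.IsEmptyP ∧ ¬ U.Primitive ∧ U.Sequential ∧ ¬ U.Parallel) ∨
    (¬ U.IsEmptyP ∧ ¬ U.Primitive ∧ ¬ U.Sequential ∧ U.Parallel) := by
  rcases U.eq_eps_or_primitive_or_sequential_or_parallel with h | h | h | h
  · exact Or.inl ⟨h, fun h' => h'.not_isEmptyP h, fun h' => h'.not_isEmptyP h,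
      fun h' => h'.not_isEmptyP h⟩
  · exact Or.inr <| Or.inl ⟨h.not_isEmptyP, h, fun h' => h'.not_primitive h,
      fun h' => h'.not_primitive h⟩
  · exact Or.inr <| Or.inr <| Or.inl ⟨h.not_isEmptyP, h.not_primitive, h, h.not_parallel⟩
  · exact Or.inr <| Or.inr <| Or.inr ⟨h.not_isEmptyP, h.not_primitive,
      fun h' => h'.not_parallel h, h⟩

/-- Every series-parallel pomset is exactly one of: empty, primitive,
sequential, or parallel. -/
theorem sp_unique_kind {A : Type} [Fintype A] (U : Pomset A) :
    (U.IsEmptyP ∧ ¬ U.Primitive ∧ ¬ U.Sequential ∧ ¬ U.Parallel) ∨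
    (¬ U.IsEmptyP ∧ U.Primitive ∧ ¬ U.Sequential ∧ ¬ U.Parallel) ∨
    (¬ U.IsEmptyP ∧ ¬ U.Primitive ∧ U.Sequential ∧ ¬ U.Parallel) ∨
    (¬ U.IsEmptyP ∧ ¬ U.Primitive ∧ ¬ U.Sequential ∧ U.Parallel) :=
  sp_unique_kind_general U

end WBKA
end

section
/- Let U, V, W, X be series-parallel pomsets with U · V = W · X. Then there exists a series-parallel pomset Y such that either U · Y = W and V = Y · X, or U = W · Y and Y · V = X. -/
namespace WBKA

section LeviAux
variable {A : Type}

def isUnit : SPTerm A → Bool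
  | .one => true
  | .atom _ => false
  | .seq u v => isUnit u && isUnit v
  | .par u v => isUnit u && isUnit v

lemma isUnit_equiv_one {u : SPTerm A} (h : isUnit u = true) : SPEquiv u .one := by
  induction u with
  | one => exact .refl _
  | atom a => simp [isUnit] at h
  | seq u v ihu ihv =>
      simp only [isUnit, Bool.and_eq_true] at h
      exact .trans (.seqCongr (ihu h.1) (ihv h.2)) (.seqOneLeft _)
  | par u v ihu ihv =>
      simp only [isUnit, Bool.and_eq_true] at h
      exact .trans (.parCongr (ihu h.1) (ihv h.2)) (.parOne _)

lemma isUnit_invariant {u v : SPTerm A} (h : SPEquiv u v) : isUnit u = isUnit v := by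
  induction h <;> simp [isUnit, *, Bool.and_assoc, Bool.and_comm]

def factors : SPTerm A → List (Pomset A)
  | .one => []
  | .atom a => [Pomset.atom a]
  | .seq u v => factors u ++ factors v
  | .par u v =>
      if isUnit u then factors v
      else if isUnit v then factors u
      else [Pomset.mk (u.par v)]

lemma factors_unit {u : SPTerm A} (h : isUnit u = true) : factors u = [] := by
  induction u with
  | one => rfl
  | atom a => simp [isUnit] at h
  | seq u v ihu ihv =>
      simp only [isUnit, Bool.and_eq_true] at h
      simp [factors, ihu h.1, ihv h.2]
  | par u v ihu ihv =>
      simp only [isUnit, Bool.and_eq_true] at h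
      simp [factors, h.1, ihv h.2]

lemma mk_par_one_left {u v : SPTerm A} (h : isUnit u = true) :
    Pomset.mk (u.par v) = Pomset.mk v :=
  Quotient.sound (.trans (.parComm _ _)
    (.trans (.parCongr (.refl v) (isUnit_equiv_one h)) (.parOne _)))

lemma mk_par_one_right {u v : SPTerm A} (h : isUnit v = true) :
    Pomset.mk (u.par v) = Pomset.mk u :=
  Quotient.sound (.trans (.parCongr (.refl u) (isUnit_equiv_one h)) (.parOne _))

lemma mk_par_assoc (u v w : SPTerm A) :
    Pomset.mk ((u.par v).par w) = Pomset.mk (u.par (v.par w)) :=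
  Quotient.sound (.parAssoc _ _ _)

lemma mk_par_congr {u u' v v' : SPTerm A} (h1 : Pomset.mk u = Pomset.mk u')
    (h2 : Pomset.mk v = Pomset.mk v') : Pomset.mk (u.par v) = Pomset.mk (u'.par v') :=
  Quotient.sound (.parCongr (Quotient.exact h1) (Quotient.exact h2))

lemma mk_par_comm (u v : SPTerm A) :
    Pomset.mk (u.par v) = Pomset.mk (v.par u) :=
  Quotient.sound (.parComm _ _)

lemma factors_invariant {u v : SPTerm A} (h : SPEquiv u v) : factors u = factors v := by
  induction h with
  | refl => rfl
  | symm _ ih => exact ih.symm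
  | trans _ _ ih1 ih2 => exact ih1.trans ih2
  | seqCongr _ _ ih1 ih2 => simp [factors, ih1, ih2]
  | parCongr hu hv ih1 ih2 =>
      have eu := isUnit_invariant hu
      have ev := isUnit_invariant hv
      simp only [factors, eu, ev, ih1, ih2]
      split
      · rfl
      · split
        · rfl
        · exact congrArg (fun x => [x]) (Quotient.sound (.parCongr hu hv))
  | seqAssoc u v w => simp [factors]
  | parAssoc u v w =>
      cases hbu : isUnit u <;> cases hbv : isUnit v <;> cases hbw : isUnit w <;>
        simp [factors, isUnit, hbu, hbv, hbw, factors_unit, mk_par_assoc] <;>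
        first
          | exact mk_par_congr rfl (mk_par_one_right hbw).symm
          | exact mk_par_one_left hbu
  | parComm u v =>
      cases hbu : isUnit u <;> cases hbv : isUnit v <;>
        simp [factors, hbu, hbv, factors_unit, mk_par_comm u v]
  | seqOneLeft u => simp [factors]
  | seqOneRight u => simp [factors]
  | parOne u =>
      cases hbu : isUnit u <;> simp [factors, isUnit, hbu, factors_unit]

def Pomset.sfactors : Pomset A → List (Pomset A) :=
  Quotient.lift factors (fun _ _ h => factors_invariant h)

lemma sfactors_seq (U V : Pomset A) :
    (U.seq V).sfactors = U.sfactors ++ V.sfactors := by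
  induction U using Quotient.inductionOn
  induction V using Quotient.inductionOn
  rfl

lemma eps_seq (U : Pomset A) : Pomset.eps.seq U = U := by
  induction U using Quotient.inductionOn
  exact Quotient.sound (.seqOneLeft _)

lemma seq_eps (U : Pomset A) : U.seq Pomset.eps = U := by
  induction U using Quotient.inductionOn
  exact Quotient.sound (.seqOneRight _)

lemma pseq_assoc (U V W : Pomset A) : (U.seq V).seq W = U.seq (V.seq W) := by
  induction U using Quotient.inductionOn
  induction V using Quotient.inductionOn
  induction W using Quotient.inductionOn
  exact Quotient.sound (.seqAssoc _ _ _)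

lemma seqProd_append (l m : List (Pomset A)) :
    Pomset.seqProd (l ++ m) = (Pomset.seqProd l).seq (Pomset.seqProd m) := by
  induction l with
  | nil => simp [Pomset.seqProd, eps_seq]
  | cons x l ih => simp [Pomset.seqProd, List.foldr] at ih ⊢; rw [ih, pseq_assoc]

lemma seqProd_factors (u : SPTerm A) :
    Pomset.seqProd (factors u) = Pomset.mk u := by
  induction u with
  | one => rfl
  | atom a => simp [factors, Pomset.seqProd, seq_eps]; rfl
  | seq u v ihu ihv =>
      rw [show factors (u.seq v) = factors u ++ factors v from rfl, seqProd_append, ihu, ihv]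
      rfl
  | par u v ihu ihv =>
      show Pomset.seqProd (if isUnit u then factors v
        else if isUnit v then factors u else [Pomset.mk (u.par v)]) = _
      split
      · rw [ihv]; exact (mk_par_one_left (by assumption)).symm
      · split
        · rw [ihu]; exact (mk_par_one_right (by assumption)).symm
        · simp [Pomset.seqProd, seq_eps]

lemma seqProd_sfactors (U : Pomset A) : Pomset.seqProd U.sfactors = U := by
  induction U using Quotient.inductionOn
  exact seqProd_factors _

end LeviAux


/-- Levi's lemma for sequential composition of sp-pomsets. -/
theorem pomset_levi_sequential {A : Type} (U V W X : Pomset A)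
    (h : U.seq V = W.seq X) :
    ∃ Y : Pomset A, (U.seq Y = W ∧ V = Y.seq X) ∨ (U = W.seq Y ∧ Y.seq V = X) := by
  have hf : U.sfactors ++ V.sfactors = W.sfactors ++ X.sfactors := by
    rw [← sfactors_seq, ← sfactors_seq, h]
  rcases List.append_eq_append_iff.mp hf with ⟨a, ha1, ha2⟩ | ⟨c, hc1, hc2⟩
  · refine ⟨Pomset.seqProd a, Or.inl ⟨?_, ?_⟩⟩
    · rw [← seqProd_sfactors W, ha1, seqProd_append, seqProd_sfactors]
    · rw [← seqProd_sfactors V, ha2, seqProd_append, seqProd_sfactors]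
  · refine ⟨Pomset.seqProd c, Or.inr ⟨?_, ?_⟩⟩
    · rw [← seqProd_sfactors U, hc1, seqProd_append, seqProd_sfactors]
    · rw [← seqProd_sfactors X, hc2, seqProd_append, seqProd_sfactors]

end WBKA
end
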